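/- For all real β > 0 and r ≥ 1, (1/(2π))·∫_ℝ max(0, (1/2)·ln(r·e^{−ω²/β²})) dω = (β/(3π))·(ln r)^{3/2}. -/

import Mathlib

open Real MeasureTheory

/-! The water level cuts the log-spectrum `ln r - ω²/β²` at `|ω| = β √(ln r)`, so the integrand
is `(a² - ω²)/(2β²)` on `[-a, a]` with `a = β √(ln r)` and zero outside; the area under the
parabola `a² - ω²` is `4a³/3`. -/

lemma max_zero_sq_sub_sq_eq_indicator {a : ℝ} (ha : 0 ≤ a) (ω : ℝ) :
    max 0 (a ^ 2 - ω ^ 2) = Set.indicator (Set.Icc (-a) a) (fun ω => a ^ 2 - ω ^ 2) ω := by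
  by_cases hω : ω ∈ Set.Icc (-a) a
  · rw [Set.indicator_of_mem hω, max_eq_right]
    exact sub_nonneg.2 (sq_le_sq' hω.1 hω.2)
  · rw [Set.indicator_of_notMem hω, max_eq_left]
    have : a < |ω| := by
      contrapose! hω
      exact abs_le.1 hω
    nlinarith [sq_abs ω, abs_nonneg ω]

lemma integral_max_zero_sq_sub_sq {a : ℝ} (ha : 0 ≤ a) :
    ∫ ω, max 0 (a ^ 2 - ω ^ 2) = 4 * a ^ 3 / 3 := by
  simp_rw [max_zero_sq_sub_sq_eq_indicator ha]
  rw [integral_indicator measurableSet_Icc, integral_Icc_eq_integral_Ioc,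
    ← intervalIntegral.integral_of_le (by linarith), intervalIntegral.integral_sub
      intervalIntegrable_const ((continuous_pow 2).intervalIntegrable _ _),
    intervalIntegral.integral_const, integral_pow]
  simp only [smul_eq_mul]
  ring

lemma rpow_three_halves_eq_sqrt_pow_three {x : ℝ} (hx : 0 ≤ x) :
    x ^ ((3 : ℝ) / 2) = √x ^ 3 := by
  rw [Real.sqrt_eq_rpow, ← Real.rpow_natCast, ← Real.rpow_mul hx]
  norm_num

lemma half_log_mul_exp_neg_sq_div {r : ℝ} (hr : 1 ≤ r) {β : ℝ} (hβ : β ≠ 0) (ω : ℝ) :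
    (1 / 2) * Real.log (r * Real.exp (-(ω ^ 2) / β ^ 2)) =
      1 / (2 * β ^ 2) * ((β * √(Real.log r)) ^ 2 - ω ^ 2) := by
  rw [Real.log_mul (by positivity) (Real.exp_ne_zero _), Real.log_exp, mul_pow,
    Real.sq_sqrt (Real.log_nonneg hr)]
  field_simp
  ring

theorem gallager_capacity_integral (β r : ℝ) (hβ : 0 < β) (hr : 1 ≤ r) :
    (1 / (2 * π)) * ∫ ω : ℝ, max 0 ((1 / 2) * Real.log (r * Real.exp (-(ω ^ 2) / β ^ 2))) =
      (β / (3 * π)) * Real.log r ^ ((3 : ℝ) / 2) := by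
  have hintegrand (ω : ℝ) :
      max 0 ((1 / 2) * Real.log (r * Real.exp (-(ω ^ 2) / β ^ 2))) =
        1 / (2 * β ^ 2) * max 0 ((β * √(Real.log r)) ^ 2 - ω ^ 2) := by
    rw [half_log_mul_exp_neg_sq_div hr hβ.ne', mul_max_of_nonneg _ _ (by positivity), mul_zero]
  simp_rw [hintegrand]
  rw [integral_const_mul, integral_max_zero_sq_sub_sq (by positivity),
    rpow_three_halves_eq_sqrt_pow_three (Real.log_nonneg hr)]
  field_simp
  ring
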